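/- arXiv:2410.00444 — 2 statements merged into one kernel-verified Lean document; each statement's English description precedes it below -/
import Mathlib

section
/- Let R be a prime ring with extended centroid C, and let a, b in R be such that [a, b] is a nonzero central element. If char R = 2 and RC is 4-dimensional over C, then both a and b lie in [RC, RC]. -/
/-!
Setting for a prime ring `R` with extended centroid `C` and central closure `RC`:
we model the central closure `RC` as a unital `C`-algebra `Q` whose center is exactly
`C·1`, together with a (not necessarily unital) subring `R` of `Q` that is prime and
whose `C`-span is all of `Q` (so that `Q = RC`).
-/

/-- The additive subgroup generated by commutators `a*b - b*a` with `a ∈ A`, `b ∈ B`. -/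
def commSG (Q : Type*) [Ring Q] (A B : Set Q) : AddSubgroup Q :=
  AddSubgroup.closure {x | ∃ a ∈ A, ∃ b ∈ B, x = a * b - b * a}

/-- `R` is a prime subring of `Q`. -/
def IsPrimeSubring {Q : Type*} [Ring Q] (R : NonUnitalSubring Q) : Prop :=
  ∀ a ∈ R, ∀ b ∈ R, (∀ x ∈ R, a * x * b = 0) → a = 0 ∨ b = 0

/-- `Q` is the central closure of `R` with extended centroid `C`. -/
def IsCentralClosure (C Q : Type*) [Field C] [Ring Q] [Algebra C Q]
    (R : NonUnitalSubring Q) : Prop :=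
  IsPrimeSubring R ∧ Submodule.span C (R : Set Q) = ⊤ ∧
    Set.center Q = Set.range (algebraMap C Q)

/-- `L` is a Lie ideal of the subring `R` of `Q`. -/
def IsLieIdealOf {Q : Type*} [Ring Q] (R : NonUnitalSubring Q) (L : AddSubgroup Q) : Prop :=
  (L : Set Q) ⊆ (R : Set Q) ∧ ∀ a ∈ L, ∀ r ∈ R, a * r - r * a ∈ L

/-- `L` is not contained in the center of `R`. -/
def IsNoncentral {Q : Type*} [Ring Q] (R : NonUnitalSubring Q) (L : AddSubgroup Q) : Prop :=
  ∃ a ∈ L, ∃ r ∈ R, a * r ≠ r * a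

/-- `R` is exceptional: `char R = 2` and `dim_C RC = 4`. -/
def IsExceptional (C Q : Type*) [Field C] [Ring Q] [Algebra C Q]
    (R : NonUnitalSubring Q) : Prop :=
  (∀ x ∈ R, x + x = 0) ∧ Module.finrank C Q = 4

/-- The set `Ca + C = {α • a + β·1 : α, β ∈ C}`. -/
def CaC (C : Type*) {Q : Type*} [Field C] [Ring Q] [Algebra C Q] (a : Q) : Set Q :=
  {x : Q | ∃ α β : C, x = α • a + algebraMap C Q β}

/-!
If `z = [a, b]` is a central unit, then `z⁻¹ [a, b] a = a` rewrites as the commutator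
`[a, z⁻¹ b a]`, and symmetrically `b = [z⁻¹ a b, b]`. In the central closure the center is the
field `C`, so a nonzero central `[a, b]` is such a unit.
-/

theorem mem_commSG_univ_of_isUnit_of_mem_center {Q : Type*} [Ring Q] {a b : Q}
    (hunit : IsUnit (a * b - b * a)) (hcenter : a * b - b * a ∈ Set.center Q) :
    a ∈ commSG Q Set.univ Set.univ := by
  obtain ⟨u, hu⟩ := hunit
  have hinv_comm : Commute (↑u⁻¹ : Q) a :=
    Commute.units_inv_left (hu ▸ (Semigroup.mem_center_iff.mp hcenter a).symm)
  have hcomm : a = a * (↑u⁻¹ * (b * a)) - ↑u⁻¹ * (b * a) * a := by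
    calc a = ↑u⁻¹ * (↑u * a) := by rw [Units.inv_mul_cancel_left]
      _ = ↑u⁻¹ * ((a * b - b * a) * a) := by rw [hu]
      _ = a * (↑u⁻¹ * (b * a)) - ↑u⁻¹ * (b * a) * a := by
        rw [← mul_assoc a, hinv_comm.eq.symm]; noncomm_ring
  exact hcomm ▸ AddSubgroup.subset_closure ⟨a, trivial, _, trivial, rfl⟩

theorem mem_center_of_forall_commute_of_span_eq_top {C Q : Type*} [CommSemiring C] [Semiring Q]
    [Algebra C Q] {S : Set Q} (hspan : Submodule.span C S = ⊤) {z : Q}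
    (hz : ∀ y ∈ S, z * y = y * z) : z ∈ Set.center Q := by
  have hle : Submodule.span C S ≤ Subalgebra.toSubmodule (Subalgebra.centralizer C {z}) :=
    Submodule.span_le.mpr fun y hy x hx => by rw [Set.mem_singleton_iff.mp hx, hz y hy]
  refine Semigroup.mem_center_iff.mpr fun g => ?_
  exact Subalgebra.mem_centralizer_iff C |>.mp (hle (hspan ▸ Submodule.mem_top)) z rfl |>.symm

theorem stmt14_general (C Q : Type*) [Field C] [Ring Q] [Algebra C Q] (R : NonUnitalSubring Q)
    (hcc : IsCentralClosure C Q R)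
    (a b : Q)
    (hne : a * b - b * a ≠ 0)
    (hcentral : ∀ y ∈ R, (a * b - b * a) * y = y * (a * b - b * a)) :
    a ∈ commSG Q Set.univ Set.univ ∧ b ∈ commSG Q Set.univ Set.univ := by
  obtain ⟨-, hspan, hcenter_eq⟩ := hcc
  have hcenter : a * b - b * a ∈ Set.center Q :=
    mem_center_of_forall_commute_of_span_eq_top hspan hcentral
  have hunit : IsUnit (a * b - b * a) := by
    obtain ⟨c, hc⟩ := hcenter_eq ▸ hcenter
    have hc0 : c ≠ 0 := by rintro rfl; exact hne (by simpa using hc.symm)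
    exact hc ▸ (isUnit_iff_ne_zero.mpr hc0).map (algebraMap C Q)
  have hswap : b * a - a * b = -(a * b - b * a) := (neg_sub _ _).symm
  exact ⟨mem_commSG_univ_of_isUnit_of_mem_center hunit hcenter,
    mem_commSG_univ_of_isUnit_of_mem_center (hswap ▸ hunit.neg)
      (hswap ▸ Set.neg_mem_center hcenter)⟩

/-- exceptional prime ring, 0 ≠ [a,b] ∈ Z(R) implies a, b ∈ [RC, RC]. -/
theorem stmt14 (C Q : Type*) [Field C] [Ring Q] [Algebra C Q] (R : NonUnitalSubring Q)
    (hcc : IsCentralClosure C Q R)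
    (hchar : ∀ x ∈ R, x + x = 0) (hdim : Module.finrank C Q = 4)
    (a b : Q) (ha : a ∈ R) (hb : b ∈ R)
    (hne : a * b - b * a ≠ 0)
    (hcentral : ∀ y ∈ R, (a * b - b * a) * y = y * (a * b - b * a)) :
    a ∈ commSG Q Set.univ Set.univ ∧ b ∈ commSG Q Set.univ Set.univ :=
  stmt14_general C Q R hcc a b hne hcentral
end

section
/- Let R be a prime ring with extended centroid C and let L be a noncentral Lie ideal of R. Then the following are equivalent: (i) [L, L] = 0; (ii) char R = 2, dim_C RC = 4, and LC = [a, RC] = Ca + C for every noncentral a in L; (iii) dim_C(LC) = 2. -/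
/-!
Let `a ∈ L` be noncentral and `d = ad a`. If `[L, L] = 0`, then `LC` is a commutative Lie ideal
of `RC` containing `a` and `d(RC)`, so `d² = 0` and the values of `d` commute with each other.
Expanding `d²(xy) = 0` gives `2 d(x) d(y) = 0`, and primeness forces characteristic 2. In
characteristic 2 the identity `d(s) x d(s) = d(x) d(s²) + x d(s)²` and primeness produce `z` with
`d(z)² = μ ≠ 0` central, and `x ↦ μ⁻¹ d(z) x z` inverts `d` on its kernel; hence
`ker d = d(RC) = LC` and `d(y) = 1` for some `y`. An element of `ker d` commuting with `y` is
central, which gives `ker d = Ca + C`, and rank–nullity gives `dim_C RC = 4`.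

Conversely, if `dim_C LC = 2` but `p = [b, c] ≠ 0` for some `b, c ∈ L`, then `LC` is spanned by
`p` and some `q` with `[p, q] = p`. The Jacobi identity shows `[LC, RC] ⊆ Cp`, hence `RC p ⊆ Cp`,
so `[x, y] R p = 0` for all `x, y ∈ R` and primeness makes `R` commutative.
-/

open Submodule LieAlgebra

theorem span_pair_eq_of_finrank_eq_two {K V : Type*} [Field K] [AddCommGroup V] [Module K V]
    {M : Submodule K V} (hM : Module.finrank K M = 2) {u v : V} (hu : u ∈ M) (hv : v ∈ M)
    (huv : LinearIndependent K ![u, v]) : span K {u, v} = M := by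
  have : FiniteDimensional K M := Module.finite_of_finrank_eq_succ hM
  refine eq_of_le_of_finrank_le (span_le.mpr ?_) ?_
  · rintro x (rfl | rfl) <;> assumption
  · rw [hM, ← Matrix.range_cons_cons_empty u v ![], finrank_span_eq_card huv]
    simp

section

-- The commutator bracket `⁅x, y⁆ = x * y - y * x`, kept local: globally it would change the
-- instance paths through which `Q`'s additive structure is found.
attribute [local instance] LieRing.ofAssociativeRing LieAlgebra.ofAssociativeAlgebra

variable {Q : Type*} [Ring Q]

theorem lie_mul (a b c : Q) : ⁅a, b * c⁆ = ⁅a, b⁆ * c + b * ⁅a, c⁆ := by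
  simp only [Ring.lie_def]; noncomm_ring

theorem NonUnitalSubring.lie_mem (R : NonUnitalSubring Q) {a b : Q} (ha : a ∈ R) (hb : b ∈ R) :
    ⁅a, b⁆ ∈ R :=
  R.sub_mem (R.mul_mem ha hb) (R.mul_mem hb ha)

theorem IsPrimeSubring.eq_zero_of_mul_mul_self {R : NonUnitalSubring Q} (hR : IsPrimeSubring R)
    {v : Q} (hv : v ∈ R) (h : ∀ x ∈ R, v * x * v = 0) : v = 0 :=
  (hR v hv v hv h).elim id id

theorem mul_self_mem_center (h2 : ∀ x : Q, x + x = 0) {u : Q} (hu : ∀ g, Commute u ⁅u, g⁆) :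
    u * u ∈ Set.center Q := by
  refine Semigroup.mem_center_iff.mpr fun g => (sub_eq_zero.mp ?_).symm
  have := (hu g).eq
  simp only [Ring.lie_def] at this ⊢
  linear_combination (norm := noncomm_ring) this + h2 ((u * g - g * u) * u)

theorem lie_mul_mul_lie (h2 : ∀ x : Q, x + x = 0) {a : Q}
    (hcd : ∀ x y : Q, Commute ⁅a, x⁆ ⁅a, y⁆) (s x : Q) :
    ⁅a, s⁆ * x * ⁅a, s⁆ = ⁅a, x⁆ * ⁅a, s * s⁆ + x * (⁅a, s⁆ * ⁅a, s⁆) := by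
  have hc := (hcd (x * s) s).eq
  rw [lie_mul] at hc
  rw [lie_mul a s s]
  linear_combination (norm := noncomm_ring) -hc - (hcd s x).eq * s - h2 (⁅a, x⁆ * (⁅a, s⁆ * s))

theorem exists_lie_mul_self_ne_zero {R : NonUnitalSubring Q} (hR : IsPrimeSubring R)
    (h2 : ∀ x : Q, x + x = 0) {a r : Q} (ha : a ∈ R) (hr : r ∈ R) (har : ¬Commute a r)
    (hdd : ∀ x : Q, ⁅a, ⁅a, x⁆⁆ = 0) (hcd : ∀ x y : Q, Commute ⁅a, x⁆ ⁅a, y⁆) :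
    ∃ z : Q, ⁅a, z⁆ * ⁅a, z⁆ ≠ 0 := by
  by_contra! hN
  have hΦ := lie_mul_mul_lie h2 hcd
  obtain ⟨x, hx, y, hy, hg⟩ : ∃ x ∈ R, ∃ y ∈ R, ⁅a, x⁆ * ⁅a, y⁆ ≠ 0 := by
    by_contra! hA
    refine har (commute_iff_lie_eq.mpr
      (hR.eq_zero_of_mul_mul_self (R.lie_mem ha hr) fun s hs => ?_))
    rw [hΦ, hA s hs _ (R.mul_mem hr hr), hN, mul_zero, add_zero]
  have hw : ⁅a, x * ⁅a, y⁆⁆ = ⁅a, x⁆ * ⁅a, y⁆ := by rw [lie_mul, hdd, mul_zero, add_zero]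
  have hww : ⁅a, x * ⁅a, y⁆ * (x * ⁅a, y⁆)⁆ = 0 := by
    have hy := hΦ y x
    rw [hN, mul_zero, add_zero] at hy
    rw [mul_assoc, ← mul_assoc ⁅a, y⁆, hy, lie_mul, lie_mul a ⁅a, x⁆, hdd, hdd, ← mul_assoc, hN]
    simp
  refine hg (hR.eq_zero_of_mul_mul_self (R.mul_mem (R.lie_mem ha hx) (R.lie_mem ha hy))
    fun s _ => ?_)
  rw [← hw, hΦ, hww, hN, mul_zero, mul_zero, add_zero]

theorem mem_center_of_lie_eq_zero {a y c : Q} (hdd : ∀ x : Q, ⁅a, ⁅a, x⁆⁆ = 0)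
    (hker : ∀ x y : Q, ⁅a, x⁆ = 0 → ⁅a, y⁆ = 0 → Commute x y) (hy : ⁅a, y⁆ = 1)
    (hc : ⁅a, c⁆ = 0) (hcy : Commute c y) : c ∈ Set.center Q := by
  refine Semigroup.mem_center_iff.mpr fun g => ?_
  have hg : ⁅a, g - ⁅a, g⁆ * y⁆ = 0 := by rw [lie_sub, lie_mul, hdd, hy]; simp
  have := (hker _ _ hc hg).add_right ((hker _ _ hc (hdd g)).mul_right hcy)
  rw [sub_add_cancel] at this
  exact this.eq.symm

theorem add_self_eq_zero_of_lie_lie_eq_zero (C : Type*) [Field C] [Algebra C Q]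
    {R : NonUnitalSubring Q} (hR : IsPrimeSubring R) {a r : Q} (ha : a ∈ R) (hr : r ∈ R)
    (har : ¬Commute a r) (hdd : ∀ x : Q, ⁅a, ⁅a, x⁆⁆ = 0) (x : Q) : x + x = 0 := by
  have hv : ⁅a, r⁆ ≠ 0 := mt commute_iff_lie_eq.mpr har
  have hK : ∀ y z : Q, ⁅a, y⁆ * ⁅a, z⁆ + ⁅a, y⁆ * ⁅a, z⁆ = 0 := by
    intro y z
    have := hdd (y * z)
    rwa [lie_mul, lie_add, lie_mul, lie_mul, hdd, hdd, zero_mul, mul_zero, zero_add, add_zero]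
      at this
  have hvv : ⁅a, r⁆ + ⁅a, r⁆ = 0 := by
    refine (hR _ (R.add_mem (R.lie_mem ha hr) (R.lie_mem ha hr)) _
      (R.lie_mem ha hr) fun s _ => ?_).resolve_right hv
    have h := hK r (s * r)
    rw [lie_mul] at h
    linear_combination (norm := noncomm_ring) h - hK r s * r
  have h2C : (1 + 1 : C) = 0 := by
    refine (smul_eq_zero.mp ?_).resolve_right hv
    rw [add_smul, one_smul, hvv]
  rw [← one_smul C x, ← add_smul, h2C, zero_smul]

variable {C : Type*} [Field C] [Algebra C Q]

-- `rw [lie_smul]` does not fire on `Q`: its `Module C Q` instance is found via the Lie ring.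
theorem lie_smul_right (t : C) (x y : Q) : ⁅x, t • y⁆ = t • ⁅x, y⁆ :=
  lie_smul t x y

theorem exists_lie_eq_of_lie_eq_zero {a z : Q} {μ : C} (hdd : ∀ x : Q, ⁅a, ⁅a, x⁆⁆ = 0)
    (hcd : ∀ x y : Q, Commute ⁅a, x⁆ ⁅a, y⁆) (hμ : ⁅a, z⁆ * ⁅a, z⁆ = algebraMap C Q μ)
    (hμ0 : μ ≠ 0) {x : Q} (hx : ⁅a, x⁆ = 0) : ∃ y, ⁅a, y⁆ = x := by
  have hxz : ⁅a, x * z⁆ = x * ⁅a, z⁆ := by rw [lie_mul, hx, zero_mul, zero_add]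
  refine ⟨μ⁻¹ • (⁅a, z⁆ * (x * z)), ?_⟩
  rw [lie_smul_right, lie_mul, hdd, zero_mul, zero_add, (hcd z (x * z)).eq, hxz, mul_assoc, hμ,
    ← Algebra.commutes, ← Algebra.smul_def, smul_smul, inv_mul_cancel₀ hμ0, one_smul]

theorem ker_ad_eq_span_pair_one (hcen : Set.center Q = Set.range (algebraMap C Q))
    (h2 : ∀ x : Q, x + x = 0) {a y : Q} (hdd : ∀ x : Q, ⁅a, ⁅a, x⁆⁆ = 0)
    (hker : ∀ x y : Q, ⁅a, x⁆ = 0 → ⁅a, y⁆ = 0 → Commute x y) (hy : ⁅a, y⁆ = 1) :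
    LinearMap.ker (ad C Q a) = span C {a, 1} := by
  have hcentral : ∀ c, ⁅a, c⁆ = 0 → Commute c y → ∃ γ : C, algebraMap C Q γ = c := by
    intro c hc hcy
    rw [← Set.mem_range, ← hcen]
    exact mem_center_of_lie_eq_zero hdd hker hy hc hcy
  refine le_antisymm (fun x hx => ?_) (span_le.mpr ?_)
  · have hx' : ⁅a, x⁆ = 0 := hx
    have hyy : ⁅a, y * y⁆ = 0 := by rw [lie_mul, hy, one_mul, mul_one, h2]
    -- `⁅x, y⁆` commutes with `y` since `x` commutes with `y * y` and the characteristic is 2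
    obtain ⟨γ, hγ⟩ := hcentral ⁅x, y⁆ (by rw [leibniz_lie, hx', hy]; simp [Ring.lie_def]) (by
      have := hker _ _ hx' hyy
      rw [commute_iff_lie_eq] at this ⊢
      simp only [Ring.lie_def] at this ⊢
      linear_combination (norm := noncomm_ring) this + h2 (y * y * x) - h2 (y * x * y))
    have ha : a ∈ LinearMap.ker (ad C Q a) := by simp
    obtain ⟨β, hβ⟩ := hcentral (x - γ • a) (sub_mem hx (smul_mem _ γ ha)) (by
      rw [commute_iff_lie_eq, sub_lie, smul_lie, ← hγ, hy, Algebra.algebraMap_eq_smul_one,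
        sub_self])
    rw [Algebra.algebraMap_eq_smul_one, eq_sub_iff_add_eq] at hβ
    exact mem_span_pair.mpr ⟨γ, β, by rw [← hβ, add_comm]⟩
  · rintro x (rfl | rfl) <;> simp [Ring.lie_def]

theorem linearIndependent_pair_one {a : Q} (ha : a ∉ Set.range (algebraMap C Q)) :
    LinearIndependent C ![a, 1] := by
  have : Nontrivial Q := nontrivial_of_ne a 0 fun h => ha ⟨0, by simp [h]⟩
  rw [LinearIndependent.pair_symm_iff, LinearIndependent.pair_iff' one_ne_zero]
  exact fun γ h => ha ⟨γ, by rw [Algebra.algebraMap_eq_smul_one, h]⟩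

theorem rank_span_pair_one {a : Q} (ha : a ∉ Set.range (algebraMap C Q)) :
    Module.rank C (span C {a, 1}) = 2 := by
  classical
  have hli := linearIndependent_pair_one ha
  rw [← Matrix.range_cons_cons_empty a 1 ![], rank_span hli, Cardinal.mk_fintype,
    Set.card_range_of_injective hli.injective]
  simp

theorem finrank_span_pair_one {a : Q} (ha : a ∉ Set.range (algebraMap C Q)) :
    Module.finrank C (span C {a, 1}) = 2 :=
  Module.finrank_eq_of_rank_eq (rank_span_pair_one ha)

theorem notMem_range_algebraMap_of_not_commute {a r : Q} (har : ¬Commute a r) :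
    a ∉ Set.range (algebraMap C Q) :=
  fun ⟨γ, hγ⟩ => har (hγ ▸ Algebra.commute_algebraMap_left γ r)

theorem coe_span_pair_one (a : Q) : (span C {a, 1} : Set Q) = CaC C a := by
  ext x
  simp [mem_span_pair, CaC, Algebra.algebraMap_eq_smul_one, eq_comm]

theorem coe_range_ad (a : Q) :
    (LinearMap.range (ad C Q a) : Set Q) = {x : Q | ∃ y : Q, x = a * y - y * a} := by
  ext x
  simp [Ring.lie_def, eq_comm]

theorem commute_of_mem_span {S : Set Q} (hS : ∀ a ∈ S, ∀ b ∈ S, Commute a b) {u v : Q}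
    (hu : u ∈ span C S) (hv : v ∈ span C S) : Commute u v :=
  Algebra.commute_of_mem_adjoin_of_forall_mem_commute (Algebra.span_le_adjoin C S hv) fun s hs =>
    (Algebra.commute_of_mem_adjoin_of_forall_mem_commute (Algebra.span_le_adjoin C S hu)
      fun t ht => hS s hs t ht).symm

theorem commute_of_mem_span_pair_one {a u v : Q} (hu : u ∈ span C {a, 1})
    (hv : v ∈ span C {a, 1}) : Commute u v := by
  refine commute_of_mem_span ?_ hu hv
  rintro _ (rfl | rfl) _ (rfl | rfl) <;> simp

theorem lie_mem_span_of_isLieIdealOf {R : NonUnitalSubring Q} {L : AddSubgroup Q}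
    (hsp : span C (R : Set Q) = ⊤) (hL : IsLieIdealOf R L) {u : Q}
    (hu : u ∈ span C (L : Set Q)) (x : Q) : ⁅u, x⁆ ∈ span C (L : Set Q) := by
  have hx : x ∈ span C (R : Set Q) := hsp ▸ mem_top
  induction hx using span_induction with
  | mem r hr =>
    induction hu using span_induction with
    | mem l hl => exact subset_span (hL.2 l hl r hr)
    | zero => simp
    | add u v _ _ hu hv => rw [add_lie]; exact add_mem hu hv
    | smul t u _ hu => rw [smul_lie]; exact smul_mem _ t hu
  | zero => simp
  | add x y _ _ hx hy => rw [lie_add]; exact add_mem hx hy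
  | smul t x _ hx => rw [lie_smul_right]; exact smul_mem _ t hx

def IsAbelianLieIdeal (M : Submodule C Q) : Prop :=
  (∀ u ∈ M, ∀ x : Q, ⁅u, x⁆ ∈ M) ∧ ∀ u ∈ M, ∀ v ∈ M, Commute u v

theorem isAbelianLieIdeal_span {R : NonUnitalSubring Q} {L : AddSubgroup Q}
    (hsp : span C (R : Set Q) = ⊤) (hL : IsLieIdealOf R L)
    (hcomm : ∀ a ∈ L, ∀ b ∈ L, Commute a b) : IsAbelianLieIdeal (span C (L : Set Q)) :=
  ⟨fun _ hu x => lie_mem_span_of_isLieIdealOf hsp hL hu x,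
    fun _ hu _ hv => commute_of_mem_span hcomm hu hv⟩

namespace IsAbelianLieIdeal

variable {R : NonUnitalSubring Q} {M : Submodule C Q} {a r : Q}

theorem lie_lie_eq_zero (hM : IsAbelianLieIdeal M) (haM : a ∈ M) (x : Q) : ⁅a, ⁅a, x⁆⁆ = 0 :=
  commute_iff_lie_eq.mp (hM.2 a haM _ (hM.1 a haM x))

theorem commute_lie_lie (hM : IsAbelianLieIdeal M) (haM : a ∈ M) (x y : Q) :
    Commute ⁅a, x⁆ ⁅a, y⁆ :=
  hM.2 _ (hM.1 a haM x) _ (hM.1 a haM y)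

theorem add_self_eq_zero (hM : IsAbelianLieIdeal M) (hR : IsPrimeSubring R) (haM : a ∈ M)
    (haR : a ∈ R) (hr : r ∈ R) (har : ¬Commute a r) (x : Q) : x + x = 0 :=
  add_self_eq_zero_of_lie_lie_eq_zero C hR haR hr har (hM.lie_lie_eq_zero haM) x

theorem le_ker_ad (hM : IsAbelianLieIdeal M) (haM : a ∈ M) : M ≤ LinearMap.ker (ad C Q a) :=
  fun u hu => commute_iff_lie_eq.mp (hM.2 a haM u hu)

theorem range_ad_le (hM : IsAbelianLieIdeal M) (haM : a ∈ M) :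
    LinearMap.range (ad C Q a) ≤ M := by
  rintro _ ⟨x, rfl⟩
  exact hM.1 a haM x

theorem ker_ad_le_range_ad (hM : IsAbelianLieIdeal M) (hR : IsPrimeSubring R)
    (hcen : Set.center Q = Set.range (algebraMap C Q)) (haM : a ∈ M) (haR : a ∈ R) (hr : r ∈ R)
    (har : ¬Commute a r) : LinearMap.ker (ad C Q a) ≤ LinearMap.range (ad C Q a) := by
  have h2 := hM.add_self_eq_zero hR haM haR hr har
  have hdd := hM.lie_lie_eq_zero haM
  have hcd := hM.commute_lie_lie haM
  obtain ⟨z, hz⟩ := exists_lie_mul_self_ne_zero hR h2 haR hr har hdd hcd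
  obtain ⟨μ, hμ⟩ : ⁅a, z⁆ * ⁅a, z⁆ ∈ Set.range (algebraMap C Q) :=
    hcen ▸ mul_self_mem_center h2 fun g => hM.2 _ (hM.1 a haM z) _ (hM.1 _ (hM.1 a haM z) g)
  have hμ0 : μ ≠ 0 := by
    rintro rfl
    exact hz (by rw [← hμ, map_zero])
  exact fun x hx => exists_lie_eq_of_lie_eq_zero hdd hcd hμ.symm hμ0 hx

theorem range_ad_eq (hM : IsAbelianLieIdeal M) (hR : IsPrimeSubring R)
    (hcen : Set.center Q = Set.range (algebraMap C Q)) (haM : a ∈ M) (haR : a ∈ R) (hr : r ∈ R)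
    (har : ¬Commute a r) : LinearMap.range (ad C Q a) = M :=
  (hM.range_ad_le haM).antisymm
    ((hM.le_ker_ad haM).trans (hM.ker_ad_le_range_ad hR hcen haM haR hr har))

theorem ker_ad_eq (hM : IsAbelianLieIdeal M) (hR : IsPrimeSubring R)
    (hcen : Set.center Q = Set.range (algebraMap C Q)) (haM : a ∈ M) (haR : a ∈ R) (hr : r ∈ R)
    (har : ¬Commute a r) : LinearMap.ker (ad C Q a) = M :=
  ((hM.ker_ad_le_range_ad hR hcen haM haR hr har).trans (hM.range_ad_le haM)).antisymm
    (hM.le_ker_ad haM)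

theorem eq_span_pair_one (hM : IsAbelianLieIdeal M) (hR : IsPrimeSubring R)
    (hcen : Set.center Q = Set.range (algebraMap C Q)) (haM : a ∈ M) (haR : a ∈ R) (hr : r ∈ R)
    (har : ¬Commute a r) : M = span C {a, 1} := by
  have hker := hM.ker_ad_eq hR hcen haM haR hr har
  obtain ⟨y, hy⟩ := hM.ker_ad_le_range_ad hR hcen haM haR hr har
    (show (1 : Q) ∈ LinearMap.ker (ad C Q a) by simp [Ring.lie_def])
  rw [← hker]
  exact ker_ad_eq_span_pair_one hcen (hM.add_self_eq_zero hR haM haR hr har)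
    (hM.lie_lie_eq_zero haM) (fun x y hx hy => hM.2 x (hker.le hx) y (hker.le hy)) hy

theorem isExceptional (hM : IsAbelianLieIdeal M) (hR : IsPrimeSubring R)
    (hcen : Set.center Q = Set.range (algebraMap C Q)) (haM : a ∈ M) (haR : a ∈ R) (hr : r ∈ R)
    (har : ¬Commute a r) : IsExceptional C Q R := by
  have hspan := hM.eq_span_pair_one hR hcen haM haR hr har
  have h := LinearMap.rank_range_add_rank_ker (ad C Q a)
  rw [hM.ker_ad_eq hR hcen haM haR hr har, hM.range_ad_eq hR hcen haM haR hr har, hspan,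
    rank_span_pair_one (notMem_range_algebraMap_of_not_commute har)] at h
  exact ⟨fun x _ => hM.add_self_eq_zero hR haM haR hr har x,
    Module.finrank_eq_of_rank_eq (by rw [← h]; norm_num)⟩

end IsAbelianLieIdeal

theorem linearIndependent_of_lie_ne_zero {u v : Q} (h : ⁅u, v⁆ ≠ 0) :
    LinearIndependent C ![u, v] := by
  refine LinearIndependent.pair_iff.mpr fun s t hst => ⟨?_, ?_⟩
  · have := congrArg (⁅·, v⁆) hst
    simp only [add_lie, smul_lie, lie_self, smul_zero, add_zero, zero_lie] at this
    exact (smul_eq_zero.mp this).resolve_right h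
  · have := congrArg (⁅·, u⁆) hst
    simp only [add_lie, smul_lie, lie_self, smul_zero, zero_add, zero_lie, ← lie_skew v u,
      smul_neg, neg_eq_zero] at this
    exact (smul_eq_zero.mp this).resolve_right h

theorem exists_lie_eq_self {M : Submodule C Q} (hM : Module.finrank C M = 2) {b c : Q}
    (hb : b ∈ M) (hc : c ∈ M) (hbcM : ⁅b, c⁆ ∈ M) (hbc : ⁅b, c⁆ ≠ 0) :
    ∃ q ∈ M, ⁅⁅b, c⁆, q⁆ = ⁅b, c⁆ := by
  rw [← span_pair_eq_of_finrank_eq_two hM hb hc (linearIndependent_of_lie_ne_zero hbc)] at hbcM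
  obtain ⟨β, γ, hp⟩ := mem_span_pair.mp hbcM
  have hpb : ⁅β • b + γ • c, b⁆ = -γ • ⁅b, c⁆ := by
    rw [add_lie, smul_lie, smul_lie, lie_self, ← lie_skew c b, smul_zero, zero_add, smul_neg,
      neg_smul]
  have hpc : ⁅β • b + γ • c, c⁆ = β • ⁅b, c⁆ := by
    rw [add_lie, smul_lie, smul_lie, lie_self, smul_zero, add_zero]
  rw [hp] at hpb hpc
  by_cases hγ : γ = 0
  · have hβ : β ≠ 0 := by
      rintro rfl
      exact hbc (by rw [← hp, hγ, zero_smul, zero_smul, add_zero])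
    exact ⟨β⁻¹ • c, smul_mem _ _ hc, by rw [lie_smul_right, hpc, smul_smul, inv_mul_cancel₀ hβ,
      one_smul]⟩
  · refine ⟨(-γ)⁻¹ • b, smul_mem _ _ hb, ?_⟩
    rw [lie_smul_right, hpb, smul_smul, inv_mul_cancel₀ (neg_ne_zero.mpr hγ), one_smul]

theorem mul_mem_span_singleton_of_lie_eq_self {p q : Q} (hpq : ⁅p, q⁆ = p) (hp : p ≠ 0)
    (hstable : ∀ x : Q, ⁅p, x⁆ ∈ span C {p, q} ∧ ⁅q, x⁆ ∈ span C {p, q}) (x : Q) :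
    x * p ∈ C ∙ p := by
  have hind : LinearIndependent C ![p, q] := linearIndependent_of_lie_ne_zero (hpq.symm ▸ hp)
  -- by the Jacobi identity, the `q`-components of `⁅p, x⁆` and `⁅q, x⁆` vanish
  have hline : ∀ x : Q, ⁅p, x⁆ ∈ C ∙ p ∧ ⁅q, x⁆ ∈ C ∙ p := by
    intro x
    obtain ⟨f₁, f₂, hf⟩ := mem_span_pair.mp (hstable x).1
    obtain ⟨g₁, g₂, hg⟩ := mem_span_pair.mp (hstable x).2
    have hJ : ⁅p, x⁆ = ⁅p, ⁅q, x⁆⁆ - ⁅q, ⁅p, x⁆⁆ := by rw [← lie_lie, hpq]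
    rw [← hf, ← hg, lie_add, lie_add, lie_smul_right, lie_smul_right, lie_smul_right,
      lie_smul_right, lie_self, lie_self, hpq, ← lie_skew q p, hpq] at hJ
    obtain ⟨hg₂, hf₂⟩ := LinearIndependent.pair_iff.mp hind (-g₂) f₂
      (by linear_combination (norm := module) hJ)
    rw [neg_eq_zero] at hg₂
    refine ⟨mem_span_singleton.mpr ⟨f₁, ?_⟩, mem_span_singleton.mpr ⟨g₁, ?_⟩⟩
    · rw [← hf, hf₂, zero_smul, add_zero]
    · rw [← hg, hg₂, zero_smul, add_zero]
  have hpp : p * p ∈ C ∙ p := by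
    simpa only [lie_mul, hpq, lie_self, mul_zero, add_zero] using (hline (q * p)).1
  obtain ⟨g, hg⟩ := mem_span_singleton.mp (hline x).2
  have e : x * p = ⁅q, x⁆ * p - ⁅q, x * p⁆ := by
    rw [lie_mul, ← lie_skew q p, hpq]
    noncomm_ring
  rw [e, ← hg, smul_mul_assoc]
  exact sub_mem (smul_mem _ _ hpp) (hline (x * p)).2

theorem commute_of_mul_mem_span_singleton {R : NonUnitalSubring Q} (hR : IsPrimeSubring R)
    {p : Q} (hpR : p ∈ R) (hp : p ≠ 0) (h : ∀ x : Q, x * p ∈ C ∙ p) {x y : Q} (hx : x ∈ R)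
    (hy : y ∈ R) : Commute x y := by
  choose e he using fun x => mem_span_singleton.mp (h x)
  have hxyp : ⁅x, y⁆ * p = 0 := by
    rw [Ring.lie_def, sub_mul, mul_assoc, mul_assoc, ← he y, ← he x, mul_smul_comm, mul_smul_comm,
      ← he x, ← he y, smul_smul, smul_smul, mul_comm, sub_self]
  have hxy : ∀ s : Q, ⁅x, y⁆ * s * p = 0 := fun s => by
    rw [mul_assoc, ← he s, mul_smul_comm, hxyp, smul_zero]
  exact commute_iff_lie_eq.mpr
    ((hR _ (R.lie_mem hx hy) p hpR fun s _ => hxy s).resolve_right hp)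

theorem commute_of_finrank_span_eq_two {R : NonUnitalSubring Q} {L : AddSubgroup Q}
    (hR : IsPrimeSubring R) (hsp : span C (R : Set Q) = ⊤) (hL : IsLieIdealOf R L)
    (h2 : Module.finrank C (span C (L : Set Q)) = 2) {b c : Q} (hb : b ∈ L) (hc : c ∈ L)
    (hbc : ¬Commute b c) {x y : Q} (hx : x ∈ R) (hy : y ∈ R) : Commute x y := by
  have hpL : ⁅b, c⁆ ∈ L := hL.2 b hb c (hL.1 hc)
  have hp : ⁅b, c⁆ ≠ 0 := mt commute_iff_lie_eq.mpr hbc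
  obtain ⟨q, hq, hpq⟩ :=
    exists_lie_eq_self h2 (subset_span hb) (subset_span hc) (subset_span hpL) hp
  have hspan := span_pair_eq_of_finrank_eq_two h2 (subset_span hpL) hq
    (linearIndependent_of_lie_ne_zero (C := C) (hpq.symm ▸ hp))
  refine commute_of_mul_mem_span_singleton (C := C) hR (hL.1 hpL) hp
    (mul_mem_span_singleton_of_lie_eq_self hpq hp fun x => ?_) hx hy
  rw [hspan]
  exact ⟨lie_mem_span_of_isLieIdealOf hsp hL (subset_span hpL) x,
    lie_mem_span_of_isLieIdealOf hsp hL hq x⟩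

end

/-- for a noncentral Lie ideal L of a prime ring R, the following are
equivalent: (i) [L, L] = 0; (ii) R is exceptional and LC = [a, RC] = Ca + C for every
noncentral a ∈ L; (iii) dim_C LC = 2. -/
theorem stmt15 (C Q : Type*) [Field C] [Ring Q] [Algebra C Q] (R : NonUnitalSubring Q)
    (hcc : IsCentralClosure C Q R)
    (L : AddSubgroup Q) (hLie : IsLieIdealOf R L) (hnc : IsNoncentral R L) :
    let I : Prop := ∀ a ∈ L, ∀ b ∈ L, a * b = b * a
    let II : Prop := IsExceptional C Q R ∧
      ∀ a ∈ L, (∃ r ∈ R, a * r ≠ r * a) →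
        ((Submodule.span C (L : Set Q) : Set Q) = {x : Q | ∃ y : Q, x = a * y - y * a} ∧
          (Submodule.span C (L : Set Q) : Set Q) = CaC C a)
    let III : Prop := Module.finrank C ↥(Submodule.span C (L : Set Q)) = 2
    (I ↔ II) ∧ (II ↔ III) := by
  obtain ⟨hR, hsp, hcen⟩ := hcc
  obtain ⟨a₀, ha₀, r₀, hr₀, hnc₀⟩ := hnc
  intro I II III
  have hI_II : I → II := by
    intro hI
    have hM := isAbelianLieIdeal_span hsp hLie hI
    refine ⟨hM.isExceptional hR hcen (subset_span ha₀) (hLie.1 ha₀) hr₀ hnc₀,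
      fun a ha ⟨r, hr, har⟩ => ⟨?_, ?_⟩⟩
    · rw [← hM.range_ad_eq hR hcen (subset_span ha) (hLie.1 ha) hr har, coe_range_ad]
    · rw [hM.eq_span_pair_one hR hcen (subset_span ha) (hLie.1 ha) hr har, coe_span_pair_one]
  have hII_span : II → span C (L : Set Q) = span C {a₀, 1} := fun h => SetLike.coe_injective
    ((h.2 a₀ ha₀ ⟨r₀, hr₀, hnc₀⟩).2.trans (coe_span_pair_one a₀).symm)
  have hII_I : II → I := fun h b hb c hc =>
    commute_of_mem_span_pair_one (hII_span h ▸ subset_span hb) (hII_span h ▸ subset_span hc)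
  have hII_III : II → III := fun h => by
    show Module.finrank C (span C (L : Set Q)) = 2
    rw [hII_span h]
    exact finrank_span_pair_one (notMem_range_algebraMap_of_not_commute hnc₀)
  have hIII_I : III → I := fun h3 b hb c hc => by_contra fun hbc =>
    hnc₀ (commute_of_finrank_span_eq_two hR hsp hLie h3 hb hc hbc (hLie.1 ha₀) hr₀)
  exact ⟨⟨hI_II, hII_I⟩, hII_III, hI_II ∘ hIII_I⟩
end
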